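/- For every positive integer k, the graph G' = K_{k+1} \vee ((2k)K_2 \cup 2K_1) (the join of a complete graph on k+1 vertices with the disjoint union of 2k copies of K_2 and two isolated vertices) is connected but is not a P_{\geq 3}-factor covered graph. -/

import Mathlib

open SimpleGraph

section Defs

variable {V : Type*} {α β : Type*}

/-- A graph is *factor-critical* if deleting any vertex leaves a graph
with a perfect matching. -/
def FactorCritical (G : SimpleGraph V) : Prop :=
  ∀ v : V, ∃ M : (G.induce {u | u ≠ v}).Subgraph, M.IsPerfectMatching

/-- A *sun* is `K₁`, `K₂`, or a graph obtained from a factor-critical graph `R`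
with vertex set `Y = {y₁, …, yₙ}` by adding `n` new vertices `x₁, …, xₙ` and the
pendant edges `y₁x₁, …, yₙxₙ`. -/
def IsSun (G : SimpleGraph V) : Prop :=
  (Nat.card V = 1) ∨ (Nat.card V = 2 ∧ G.Connected) ∨
  (∃ Y : Set V, Y.Nonempty ∧ FactorCritical (G.induce Y) ∧
    ∃ f : (Yᶜ : Set V) ≃ Y, ∀ x : (Yᶜ : Set V), G.neighborSet ↑x = {(↑(f x) : V)})

/-- `sunCount G` is the number of connected components of `G` that are suns. -/
noncomputable def sunCount (G : SimpleGraph V) : ℕ :=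
  Nat.card {c : G.ConnectedComponent // IsSun (G.induce c.supp)}

/-- Number of isolated vertices of a graph. -/
noncomputable def isolatedCount (G : SimpleGraph V) : ℕ :=
  {v : V | ∀ w : V, ¬ G.Adj v w}.ncard

/-- A set of vertices is independent if no two of its vertices are adjacent. -/
def IndepSet (G : SimpleGraph V) (A : Set V) : Prop :=
  A.Pairwise fun u v => ¬ G.Adj u v

/-- The independence number of a graph: the maximum size of an independent set. -/
noncomputable def indepNum (G : SimpleGraph V) : ℕ :=
  sSup {n | ∃ A : Set V, IndepSet G A ∧ A.ncard = n}

/-- The neighborhood `N_G(A)` of a set `A` of vertices: the union of the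
neighborhoods of the vertices of `A`. -/
def neighborSetOf (G : SimpleGraph V) (A : Set V) : Set V :=
  {v | ∃ a ∈ A, G.Adj a v}

/-- `H` is a `P_{≥3}`-factor of `G`: a spanning subgraph of `G` each of whose
connected components is a path on at least `3` vertices. -/
def IsPathFactor (G H : SimpleGraph V) : Prop :=
  H ≤ G ∧ ∀ c : H.ConnectedComponent,
    ∃ n : ℕ, 3 ≤ n ∧ Nonempty ((H.induce c.supp) ≃g pathGraph n)

/-- A connected graph `G` is a `P_{≥3}`-factor covered graph if every edge of `G`
is contained in some `P_{≥3}`-factor of `G`. -/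
def PathFactorCovered (G : SimpleGraph V) : Prop :=
  G.Connected ∧ ∀ e ∈ G.edgeSet, ∃ H : SimpleGraph V, IsPathFactor G H ∧ e ∈ H.edgeSet

/-- A graph `G` is a `P_{≥3}`-factor uniform graph if `G - e` is a
`P_{≥3}`-factor covered graph for every edge `e` of `G`. -/
def PathFactorUniform (G : SimpleGraph V) : Prop :=
  ∀ e ∈ G.edgeSet, PathFactorCovered (G.deleteEdges {e})

/-- The parameter `ε(X)` from Zhou–Zhang's characterization of
`P_{≥3}`-factor covered graphs. -/
noncomputable def eps (G : SimpleGraph V) (X : Set V) : ℕ := by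
  classical
  exact if ¬ IndepSet G X then 2
    else if X.Nonempty ∧ ∃ c : (G.induce Xᶜ).ConnectedComponent,
        ¬ IsSun ((G.induce Xᶜ).induce c.supp) then 1
    else 0

/-- A graph is 2-edge-connected if it is connected and stays connected after
the deletion of any single edge. -/
def TwoEdgeConnected (G : SimpleGraph V) : Prop :=
  G.Connected ∧ ∀ e ∈ G.edgeSet, (G.deleteEdges {e}).Connected

/-- A graph is `k`-connected if it has more than `k` vertices and remains
connected after deleting any fewer than `k` vertices. -/
def KConnected [Fintype V] (k : ℕ) (G : SimpleGraph V) : Prop :=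
  k < Fintype.card V ∧ ∀ S : Set V, S.ncard < k → (G.induce Sᶜ).Connected

/-- The join `G₁ ∨ G₂` of two graphs: take disjoint copies of `G₁` and `G₂`
and add all edges between them. -/
def graphJoin (G : SimpleGraph α) (H : SimpleGraph β) : SimpleGraph (α ⊕ β) where
  Adj x y :=
    match x, y with
    | Sum.inl a, Sum.inl b => G.Adj a b
    | Sum.inr a, Sum.inr b => H.Adj a b
    | Sum.inl _, Sum.inr _ => True
    | Sum.inr _, Sum.inl _ => True
  symm := by
    constructor
    rintro (a | a) (b | b) h
    · exact h.symm
    · trivial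
    · trivial
    · exact h.symm
  loopless := by
    constructor
    rintro (a | a) h
    · exact G.irrefl h
    · exact H.irrefl h

/-- The disjoint union of two graphs. -/
def graphSum (G : SimpleGraph α) (H : SimpleGraph β) : SimpleGraph (α ⊕ β) where
  Adj x y :=
    match x, y with
    | Sum.inl a, Sum.inl b => G.Adj a b
    | Sum.inr a, Sum.inr b => H.Adj a b
    | _, _ => False
  symm := by
    constructor
    rintro (a | a) (b | b) h
    · exact h.symm
    · exact h.elim
    · exact h.elim
    · exact h.symm
  loopless := by
    constructor
    rintro (a | a) h
    · exact G.irrefl h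
    · exact H.irrefl h

/-- `mK2 m` is the disjoint union of `m` copies of `K₂`. -/
def mK2 (m : ℕ) : SimpleGraph (Fin m × Fin 2) where
  Adj p q := p.1 = q.1 ∧ p.2 ≠ q.2
  symm := by constructor; rintro p q ⟨h1, h2⟩; exact ⟨h1.symm, h2.symm⟩
  loopless := by constructor; rintro p ⟨h1, h2⟩; exact h2 rfl

end Defs

/-!
Let `H` be a `P_{≥3}`-factor of `G' = K_{k+1} ∨ ((2k)K₂ ∪ 2K₁)` containing an edge inside
`K_{k+1}`. Every vertex has degree at most two in `H`, so at most `2(k+1)` edge-ends of `H` lie in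
`K_{k+1}`. Each of the `2k + 2` components of `(2k)K₂ ∪ 2K₁` has fewer than three vertices, so it
is joined by an edge of `H` to `K_{k+1}`; with the two ends of the edge inside `K_{k+1}` this gives
`2k + 4 > 2(k+1)` edge-ends.
-/

variable {V α β : Type*}

lemma SimpleGraph.pathGraph_card_neighborSet_le_two (n : ℕ) (i : Fin n) :
    Nat.card ((pathGraph n).neighborSet i) ≤ 2 := by
  -- the only neighbours of `i` are `i + 1` and `i - 1`
  let code : (pathGraph n).neighborSet i → Fin 2 := fun j =>
    if (j : Fin n).val = i.val + 1 then 0 else 1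
  have hcode : Function.Injective code := by
    rintro ⟨a, ha⟩ ⟨b, hb⟩ h
    rw [mem_neighborSet, pathGraph_adj] at ha hb
    dsimp only [code] at h
    refine Subtype.ext (Fin.ext ?_)
    dsimp only
    split_ifs at h <;> omega
  simpa using Nat.card_le_card_of_injective code hcode

theorem graphJoin_connected [Nonempty α] [Nonempty β] (G : SimpleGraph α) (H : SimpleGraph β) :
    (graphJoin G H).Connected := by
  obtain ⟨a⟩ := ‹Nonempty α›
  obtain ⟨b⟩ := ‹Nonempty β›
  have hadj : ∀ a' b', (graphJoin G H).Adj (.inl a') (.inr b') := fun _ _ => trivial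
  refine connected_iff_exists_forall_reachable _ |>.mpr ⟨.inr b, ?_⟩
  rintro (a' | b')
  · exact (hadj a' b).reachable.symm
  · exact (hadj a b).reachable.symm.trans (hadj a b').reachable

namespace IsPathFactor

variable {G H : SimpleGraph V}

lemma card_neighborSet_le_two (hH : IsPathFactor G H) (v : V) :
    Nat.card (H.neighborSet v) ≤ 2 := by
  obtain ⟨n, -, ⟨φ⟩⟩ := hH.2 (H.connectedComponentMk v)
  let toPath : H.neighborSet v → (pathGraph n).neighborSet (φ ⟨v, rfl⟩) := fun w =>
    ⟨φ ⟨w, ConnectedComponent.connectedComponentMk_eq_of_adj w.2.symm⟩, φ.map_adj_iff.mpr w.2⟩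
  have : Function.Injective toPath := by
    intro w w' h
    exact Subtype.ext (congrArg Subtype.val (φ.injective (congrArg Subtype.val h)) :)
  exact (Nat.card_le_card_of_injective toPath this).trans (pathGraph_card_neighborSet_le_two n _)

lemma three_le_card_supp (hH : IsPathFactor G H) (c : H.ConnectedComponent) :
    3 ≤ Nat.card c.supp := by
  obtain ⟨n, hn, ⟨φ⟩⟩ := hH.2 c
  simpa [Nat.card_congr φ.toEquiv] using hn

lemma exists_adj_notMem [Finite V] (hH : IsPathFactor G H) {S : Set V} (hS : S.ncard ≤ 2)
    {v : V} (hv : v ∈ S) : ∃ s ∈ S, ∃ w ∉ S, H.Adj s w := by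
  have hnot : ¬ (H.connectedComponentMk v).supp ⊆ S := fun hsub => by
    have hle := Set.ncard_le_ncard hsub S.toFinite
    have h3 := hH.three_le_card_supp (H.connectedComponentMk v)
    rw [Nat.card_coe_set_eq] at h3
    omega
  obtain ⟨u, hu, huS⟩ := Set.not_subset.mp hnot
  obtain ⟨p⟩ := ConnectedComponent.exact hu
  obtain ⟨d, -, hd, hd'⟩ := p.reverse.exists_boundary_dart S hv huS
  exact ⟨d.fst, hd, d.snd, hd', d.adj⟩

end IsPathFactor

lemma SimpleGraph.card_adj_pairs_le [Fintype α] [Finite V] {H : SimpleGraph V} {d : ℕ}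
    (hdeg : ∀ v, Nat.card (H.neighborSet v) ≤ d) (f : α → V) :
    Nat.card {p : α × V // H.Adj (f p.1) p.2} ≤ d * Fintype.card α := by
  rw [Nat.card_congr (Equiv.subtypeProdEquivSigmaSubtype fun a w => H.Adj (f a) w), Nat.card_sigma]
  calc ∑ a, Nat.card {w // H.Adj (f a) w} ≤ ∑ _a : α, d := Finset.sum_le_sum fun a _ => hdeg (f a)
    _ = d * Fintype.card α := by simp [mul_comm]

section JoinWithMatching

variable {A : SimpleGraph α} {m : ℕ} {H : SimpleGraph (α ⊕ ((Fin m × Fin 2) ⊕ β))}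

/-- The components of `graphSum (mK2 m) ⊥` are indexed by `r : Fin m ⊕ β`: the vertices of
component `r` are `Sum.map (·, b) id r` for `b : Fin 2` (an isolated vertex is listed twice). -/
lemma IsPathFactor.exists_adj_inl [Finite α] [Finite β]
    (hH : IsPathFactor (graphJoin A (graphSum (mK2 m) ⊥)) H) (r : Fin m ⊕ β) :
    ∃ x b, H.Adj (.inl x) (.inr (Sum.map (·, b) id r)) := by
  obtain ⟨_, ⟨b, rfl⟩, w, hw, hadj⟩ := hH.exists_adj_notMem
    (S := Set.range fun b : Fin 2 => (.inr (Sum.map (·, b) id r) : α ⊕ _))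
    ((Finite.card_range_le _).trans (by simp)) ⟨0, rfl⟩
  rcases w with x | v
  · exact ⟨x, b, hadj.symm⟩
  · have hGadj := hH.1 hadj
    refine absurd ?_ hw
    rcases r with i | j <;> rcases v with ⟨i', b'⟩ | j'
    · obtain ⟨rfl, -⟩ : i = i' ∧ b ≠ b' := hGadj
      exact ⟨b', rfl⟩
    all_goals exact hGadj.elim

theorem IsPathFactor.card_add_card_add_two_le [Fintype α] [Fintype β]
    (hH : IsPathFactor (graphJoin A (graphSum (mK2 m) ⊥)) H) {a a' : α}
    (haa' : H.Adj (.inl a) (.inl a')) :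
    m + Fintype.card β + 2 ≤ 2 * Fintype.card α := by
  choose x b hxb using hH.exists_adj_inl
  let inner : Fin 2 → {p : α × _ // H.Adj (.inl p.1) p.2} :=
    ![⟨(a, .inl a'), haa'⟩, ⟨(a', .inl a), haa'.symm⟩]
  let outer : Fin m ⊕ β → {p : α × _ // H.Adj (.inl p.1) p.2} :=
    fun r => ⟨(x r, .inr (Sum.map (·, b r) id r)), hxb r⟩
  have hinj : Function.Injective (Sum.elim inner outer) := by
    refine Function.Injective.sumElim ?_ ?_ ?_
    · have hne : a ≠ a' := fun h => H.irrefl (h ▸ haa')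
      intro i j h
      fin_cases i <;> fin_cases j <;> simp_all [inner]
    · intro r r' h
      rcases r with i | j <;> rcases r' with i' | j' <;> simp_all [outer]
    · intro i r
      fin_cases i <;> simp [inner, outer]
  have hlower := Nat.card_le_card_of_injective _ hinj
  have hupper := card_adj_pairs_le hH.card_neighborSet_le_two (Sum.inl : α → _)
  simp only [Nat.card_eq_fintype_card, Fintype.card_sum, Fintype.card_fin] at hlower hupper
  omega

end JoinWithMatching

/-- **Remark 2 (continued).** For every `k ≥ 1`, the graph
`G' = K_{k+1} ∨ ((2k)K₂ ∪ 2K₁)` is connected but is not a `P_{≥3}`-factor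
covered graph. -/
theorem stmt7 (k : ℕ) (hk : 1 ≤ k) :
    letI G' := graphJoin (completeGraph (Fin (k + 1)))
      (graphSum (mK2 (2 * k)) (⊥ : SimpleGraph (Fin 2)))
    G'.Connected ∧ ¬ PathFactorCovered G' := by
  refine ⟨graphJoin_connected _ _, fun ⟨_, hcov⟩ => ?_⟩
  have h01 : (0 : Fin (k + 1)) ≠ 1 := by
    obtain ⟨j, rfl⟩ : ∃ j, k = j + 1 := ⟨k - 1, by omega⟩
    exact Fin.zero_ne_one
  obtain ⟨H, hH, he⟩ := hcov s(.inl 0, .inl 1) h01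
  have hcard := hH.card_add_card_add_two_le he
  simp only [Fintype.card_fin] at hcard
  omega
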